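/- arXiv:1601.08227 — 2 statements merged into one kernel-verified Lean document; each statement's English description precedes it below -/
import Mathlib

section
/- Let π be a random probability vector on F_q arising from a discrete symmetric channel, i.e., for every α ∈ F_q and every realization p of π, p(α)·prob(π = p) = p(0)·prob(π = p^{+α}), where p^{+α}(β) = p(β+α). Then E[π(0)] = E[∑_{α ∈ F_q} π(α)²]. -/
open Finset

open Classical in
/-- Probability that the random variable `π` (on the finite weighted sample space
`(Ω, w)`) takes the value `p`. -/
noncomputable def probEq {Ω : Type*} [Fintype Ω] {F : Type*}
    (w : Ω → ℝ) (π : Ω → (F → ℝ)) (p : F → ℝ) : ℝ :=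
  ∑ ω, if π ω = p then w ω else 0

theorem stmt4 {Ω : Type*} [Fintype Ω] {F : Type*} [Field F] [Fintype F]
    (w : Ω → ℝ) (hw0 : ∀ ω, 0 ≤ w ω) (hw1 : ∑ ω, w ω = 1)
    (π : Ω → (F → ℝ))
    (hπ0 : ∀ ω α, 0 ≤ π ω α) (hπ1 : ∀ ω, ∑ α, π ω α = 1)
    (hsym : ∀ (α : F) (p : F → ℝ),
      p α * probEq w π p = p 0 * probEq w π (fun β => p (β + α))) :
    ∑ ω, w ω * π ω 0 = ∑ ω, w ω * ∑ α, (π ω α) ^ 2 := by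
  classical
  set T : Finset (F → ℝ) :=
    Finset.image (fun x : Ω × F => fun β => π x.1 (β + x.2)) Finset.univ with hTdef
  have hmemT : ∀ ω, π ω ∈ T := by
    intro ω
    refine Finset.mem_image.2 ⟨(ω, 0), Finset.mem_univ _, ?_⟩
    funext β; simp
  have hclosed : ∀ p ∈ T, ∀ α : F, (fun β => p (β + α)) ∈ T := by
    intro p hp α
    obtain ⟨⟨ω, γ⟩, -, rfl⟩ := Finset.mem_image.1 hp
    refine Finset.mem_image.2 ⟨(ω, α + γ), Finset.mem_univ _, ?_⟩
    funext β; simp [add_assoc]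
  have hone : ∀ p ∈ T, ∑ α, p α = 1 := by
    intro p hp
    obtain ⟨⟨ω, γ⟩, -, rfl⟩ := Finset.mem_image.1 hp
    rw [← hπ1 ω]
    exact Fintype.sum_equiv (Equiv.addRight γ) _ _ (fun β => rfl)
  have hkey : ∀ f : (F → ℝ) → ℝ,
      ∑ ω, w ω * f (π ω) = ∑ p ∈ T, probEq w π p * f p := by
    intro f
    unfold probEq
    simp only [Finset.sum_mul, ite_mul, zero_mul]
    rw [Finset.sum_comm]
    refine Finset.sum_congr rfl fun ω _ => ?_
    rw [Finset.sum_ite_eq T (π ω) (fun p => w ω * f p), if_pos (hmemT ω)]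
  have hshift : ∀ (α : F) (g : (F → ℝ) → ℝ),
      ∑ p ∈ T, g (fun β => p (β + α)) = ∑ p ∈ T, g p := by
    intro α g
    refine Finset.sum_nbij' (i := fun p => fun β => p (β + α))
      (j := fun q => fun β => q (β + (-α)))
      (fun p hp => hclosed p hp α) (fun q hq => hclosed q hq (-α))
      ?_ ?_ (fun p _ => rfl)
    · intro p _; funext β; simp
    · intro q _; funext β; simp
  rw [hkey (fun p => p 0), hkey (fun p => ∑ α, p α ^ 2)]
  have step1 : ∀ p ∈ T, probEq w π p * ∑ α, p α ^ 2
      = ∑ α, p α * (p 0 * probEq w π (fun β => p (β + α))) := by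
    intro p hp
    rw [Finset.mul_sum]
    refine Finset.sum_congr rfl fun α _ => ?_
    rw [← hsym α p]; ring
  rw [Finset.sum_congr rfl step1, Finset.sum_comm]
  have step2 : ∀ α : F, ∑ p ∈ T, p α * (p 0 * probEq w π (fun β => p (β + α)))
      = ∑ q ∈ T, q 0 * (q (-α) * probEq w π q) := by
    intro α
    rw [← hshift α (fun q => q 0 * (q (-α) * probEq w π q))]
    refine Finset.sum_congr rfl fun p hp => ?_
    simp
  rw [Finset.sum_congr rfl (fun α _ => step2 α), Finset.sum_comm]
  refine Finset.sum_congr rfl fun q hq => ?_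
  have hq1 : ∑ α, q (-α) = 1 := by
    rw [← hone q hq]
    exact Fintype.sum_equiv (Equiv.neg F) _ _ (fun β => rfl)
  symm
  calc ∑ α, q 0 * (q (-α) * probEq w π q)
      = q 0 * ((∑ α, q (-α)) * probEq w π q) := by
        rw [Finset.sum_mul, Finset.mul_sum]
    _ = probEq w π q * q 0 := by rw [hq1]; ring
end

section
/- Let R_{UV}(p) = (p³-4p²+4p-4)(1-p)²/(2(p-2)) be the (U|U+V) threshold and R_{GS}(p) = (1-p)² the Guruswami-Sudan threshold. Then there exists p* ∈ (0,1) such that R_{UV}(p) > R_{GS}(p) for all p ∈ (p*, 1). -/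
theorem stmt14 :
    ∃ pstar : ℝ, 0 < pstar ∧ pstar < 1 ∧
      ∀ p : ℝ, pstar < p → p < 1 →
        (p ^ 3 - 4 * p ^ 2 + 4 * p - 4) * (1 - p) ^ 2 / (2 * (p - 2))
          > (1 - p) ^ 2 := by
  refine ⟨3/5, by norm_num, by norm_num, fun p hp hp1 => ?_⟩
  have hc : 2 * (p - 2) < 0 := by linarith
  rw [gt_iff_lt, lt_div_iff_of_neg hc]
  have h1 : (0:ℝ) < p * (1 - p) ^ 2 := mul_pos (by linarith) (pow_pos (by linarith) 2)
  nlinarith [mul_pos h1 (by nlinarith : (0:ℝ) < -(p^2 - 4*p + 2))]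
end
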